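/- Let 𝒳 be a finite set of cardinality k > 1 and d > 1 finite. The map P ↦ λ_ℰ(P) from the probability measures on 𝒳^d (with the total variation metric) to ℝ is continuous. -/

import Mathlib

open scoped BigOperators Classical

/-- A function `P : Ω → ℝ` on a finite sample space is a probability measure if it is
nonnegative and sums to one. -/
def IsProb {Ω : Type*} [Fintype Ω] (P : Ω → ℝ) : Prop :=
  (∀ ω, 0 ≤ P ω) ∧ ∑ ω, P ω = 1

/-- A probability measure on `𝒳^ι` is exchangeable if it is invariant under all
coordinate permutations. -/
def Exchangeable {ι 𝒳 : Type*} (Q : (ι → 𝒳) → ℝ) : Prop :=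
  ∀ σ : Equiv.Perm ι, ∀ x : ι → 𝒳, Q (x ∘ σ) = Q x

/-- The exchangeable weight `λ_ℰ(P)`: the supremum of `λ` such that `P ≥ λ·Q` pointwise
for some exchangeable probability measure `Q`. -/
noncomputable def exchWeight {ι 𝒳 : Type*} [Fintype ι] [Fintype 𝒳]
    (P : (ι → 𝒳) → ℝ) : ℝ :=
  sSup {l : ℝ | ∃ Q : (ι → 𝒳) → ℝ, IsProb Q ∧ Exchangeable Q ∧ ∀ x, l * Q x ≤ P x}

/-- The permutation-equivalence class `[x]` of `x`, as a set. -/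
def permSet {ι 𝒳 : Type*} (x : ι → 𝒳) : Set (ι → 𝒳) :=
  {y | ∃ σ : Equiv.Perm ι, y = x ∘ σ}

/-- The permutation-equivalence class `[x]` of `x`, as a finset. -/
noncomputable def permClass {ι 𝒳 : Type*} [Fintype ι] (x : ι → 𝒳) :
    Finset (ι → 𝒳) :=
  Finset.univ.image (fun σ : Equiv.Perm ι => x ∘ σ)


/-- The total variation distance `(1/2) Σ_x |P₁(x) − P₂(x)|`. -/
noncomputable def tvDist {Ω : Type*} [Fintype Ω] (P₁ P₂ : Ω → ℝ) : ℝ :=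
  (1 / 2) * ∑ x, |P₁ x - P₂ x|

/-!
`λ_ℰ(P)` has the closed form `Σ_x min_{y ∈ [x]} P y`: for any admissible `λ Q`, exchangeability
makes `λ Q x` a lower bound for `P` on the whole class `[x]`, and conversely the class-wise
minimum of `P`, normalised, is itself an exchangeable probability measure below `P`. Each
class-wise minimum moves by at most `Σ_y |P' y - P y| = 2 tv(P, P')`, so `λ_ℰ` is Lipschitz
in total variation with constant `2 |𝒳^d|`.
-/

open Finset

theorem Finset.inf'_le_inf'_add_sup'_abs_sub {α : Type*} (s : Finset α) (hs : s.Nonempty)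
    (f g : α → ℝ) : s.inf' hs f ≤ s.inf' hs g + s.sup' hs (fun y => |f y - g y|) := by
  obtain ⟨y, hy, hgy⟩ := s.exists_mem_eq_inf' hs g
  calc s.inf' hs f ≤ f y := s.inf'_le f hy
    _ ≤ g y + |f y - g y| := by linarith [le_abs_self (f y - g y)]
    _ ≤ s.inf' hs g + s.sup' hs (fun y => |f y - g y|) := by
        rw [hgy]; gcongr; exact s.le_sup' (fun y => |f y - g y|) hy

theorem Finset.abs_inf'_sub_inf'_le_sup' {α : Type*} (s : Finset α) (hs : s.Nonempty)
    (f g : α → ℝ) : |s.inf' hs f - s.inf' hs g| ≤ s.sup' hs (fun y => |f y - g y|) := by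
  have hfg := s.inf'_le_inf'_add_sup'_abs_sub hs f g
  have hgf := s.inf'_le_inf'_add_sup'_abs_sub hs g f
  simp only [abs_sub_comm (g _)] at hgf
  exact abs_sub_le_iff.2 ⟨by linarith, by linarith⟩

section Probability

variable {Ω : Type*} [Fintype Ω]

theorem IsProb.nonempty {P : Ω → ℝ} (hP : IsProb P) : Nonempty Ω := by
  by_contra h
  have : IsEmpty Ω := not_nonempty_iff.1 h
  simpa using hP.2

theorem isProb_const_inv_card [Nonempty Ω] : IsProb (fun _ : Ω => (Fintype.card Ω : ℝ)⁻¹) := by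
  refine ⟨fun _ => by positivity, ?_⟩
  rw [sum_const, card_univ, nsmul_eq_mul, mul_inv_cancel₀]
  exact_mod_cast Fintype.card_ne_zero

theorem isProb_div_sum {f : Ω → ℝ} (hf : ∀ ω, 0 ≤ f ω) (hsum : 0 < ∑ ω, f ω) :
    IsProb (fun ω => f ω / ∑ ω, f ω) :=
  ⟨fun ω => div_nonneg (hf ω) hsum.le, by rw [← sum_div, div_self hsum.ne']⟩

theorem two_mul_tvDist (P Q : Ω → ℝ) : 2 * tvDist P Q = ∑ ω, |P ω - Q ω| := by
  rw [tvDist, ← mul_assoc]; norm_num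

theorem tvDist_nonneg (P Q : Ω → ℝ) : 0 ≤ tvDist P Q := by
  unfold tvDist; positivity

end Probability

section PermClass

variable {ι 𝒳 : Type*} [Fintype ι]

theorem mem_permClass_self (x : ι → 𝒳) : x ∈ permClass x :=
  mem_image.2 ⟨1, mem_univ _, rfl⟩

theorem permClass_comp (x : ι → 𝒳) (σ : Equiv.Perm ι) : permClass (x ∘ σ) = permClass x := by
  ext y
  simp only [permClass, mem_image, mem_univ, true_and]
  constructor
  · rintro ⟨τ, rfl⟩
    exact ⟨σ * τ, rfl⟩
  · rintro ⟨τ, rfl⟩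
    exact ⟨σ⁻¹ * τ, by ext; simp⟩

noncomputable def permClassMin (P : (ι → 𝒳) → ℝ) (x : ι → 𝒳) : ℝ :=
  (permClass x).inf' ⟨x, mem_permClass_self x⟩ P

theorem permClassMin_le (P : (ι → 𝒳) → ℝ) (x : ι → 𝒳) : permClassMin P x ≤ P x :=
  inf'_le P (mem_permClass_self x)

theorem permClassMin_nonneg {P : (ι → 𝒳) → ℝ} (hP : ∀ x, 0 ≤ P x) (x : ι → 𝒳) :
    0 ≤ permClassMin P x :=
  le_inf' _ _ fun y _ => hP y

theorem exchangeable_permClassMin (P : (ι → 𝒳) → ℝ) : Exchangeable (permClassMin P) := by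
  intro σ x
  simp only [permClassMin, permClass_comp]

theorem le_permClassMin {P Q : (ι → 𝒳) → ℝ} (hQ : Exchangeable Q) {l : ℝ}
    (hle : ∀ x, l * Q x ≤ P x) (x : ι → 𝒳) : l * Q x ≤ permClassMin P x := by
  refine le_inf' _ _ fun y hy => ?_
  obtain ⟨σ, -, rfl⟩ := mem_image.1 hy
  rw [← hQ σ x]
  exact hle _

theorem abs_permClassMin_sub_le [Fintype (ι → 𝒳)] (P P' : (ι → 𝒳) → ℝ) (x : ι → 𝒳) :
    |permClassMin P' x - permClassMin P x| ≤ ∑ y, |P' y - P y| :=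
  ((permClass x).abs_inf'_sub_inf'_le_sup' _ P' P).trans <|
    sup'_le _ _ fun y _ => single_le_sum (fun z _ => abs_nonneg (P' z - P z)) (mem_univ y)

end PermClass

section ExchWeight

variable {ι 𝒳 : Type*} [Fintype ι] [Fintype 𝒳]

theorem exchWeight_eq_sum_permClassMin [Fintype (ι → 𝒳)] {P : (ι → 𝒳) → ℝ} (hP : IsProb P) :
    exchWeight P = ∑ x, permClassMin P x := by
  -- `exchWeight` fixes the instance `Pi.instFintype` (with classical `DecidableEq ι`), while
  -- `P` may come with another one, e.g. the one over `Fin d` with `instDecidableEqFin`.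
  obtain rfl : ‹Fintype (ι → 𝒳)› = Pi.instFintype := Subsingleton.elim _ _
  have hmin_nonneg := permClassMin_nonneg hP.1
  refine IsGreatest.csSup_eq ⟨?_, ?_⟩
  · rcases (sum_nonneg fun x _ => hmin_nonneg x).eq_or_lt with hzero | hpos
    · have := hP.nonempty
      refine ⟨_, isProb_const_inv_card, fun _ _ => rfl, fun x => ?_⟩
      rw [← hzero, zero_mul]
      exact hP.1 x
    · refine ⟨_, isProb_div_sum hmin_nonneg hpos,
        fun σ x => by simp only [exchangeable_permClassMin P σ x], fun x => ?_⟩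
      rw [mul_div_cancel₀ _ hpos.ne']
      exact permClassMin_le P x
  · rintro l ⟨Q, hQ, hQexch, hle⟩
    calc l = ∑ x, l * Q x := by rw [← mul_sum, hQ.2, mul_one]
      _ ≤ ∑ x, permClassMin P x := sum_le_sum fun x _ => le_permClassMin hQexch hle x

theorem abs_exchWeight_sub_le [Fintype (ι → 𝒳)] {P P' : (ι → 𝒳) → ℝ} (hP : IsProb P)
    (hP' : IsProb P') :
    |exchWeight P' - exchWeight P| ≤ 2 * Fintype.card (ι → 𝒳) * tvDist P P' := by
  rw [exchWeight_eq_sum_permClassMin hP', exchWeight_eq_sum_permClassMin hP, ← sum_sub_distrib]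
  calc |∑ x, (permClassMin P' x - permClassMin P x)|
      ≤ ∑ x, |permClassMin P' x - permClassMin P x| := abs_sum_le_sum_abs _ _
    _ ≤ ∑ _x : ι → 𝒳, ∑ y, |P' y - P y| := sum_le_sum fun x _ => abs_permClassMin_sub_le P P' x
    _ = 2 * Fintype.card (ι → 𝒳) * tvDist P P' := by
        rw [sum_const, card_univ, nsmul_eq_mul, mul_comm 2, mul_assoc, two_mul_tvDist]
        simp only [abs_sub_comm (P' _)]

end ExchWeight

theorem stmt12_general {𝒳 : Type*} [Fintype 𝒳] {d : ℕ} :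
    ∀ P : (Fin d → 𝒳) → ℝ, IsProb P → ∀ ε : ℝ, 0 < ε → ∃ δ : ℝ, 0 < δ ∧
      ∀ P' : (Fin d → 𝒳) → ℝ, IsProb P' → tvDist P P' < δ →
        |exchWeight P' - exchWeight P| < ε := by
  intro P hP ε hε
  set L : ℝ := 2 * Fintype.card (Fin d → 𝒳)
  refine ⟨ε / (L + 1), by positivity, fun P' hP' htv => ?_⟩
  calc |exchWeight P' - exchWeight P| ≤ L * tvDist P P' := abs_exchWeight_sub_le hP hP'
    _ ≤ (L + 1) * tvDist P P' := by linarith [tvDist_nonneg P P']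
    _ < (L + 1) * (ε / (L + 1)) := by gcongr
    _ = ε := mul_div_cancel₀ ε (by positivity)

/-- The map `P ↦ λ_ℰ(P)` is continuous on the probability measures on `𝒳^d` with respect
to the total variation metric. -/
theorem stmt12 {𝒳 : Type*} [Fintype 𝒳] (hk : 1 < Fintype.card 𝒳)
    {d : ℕ} (hd : 1 < d) :
    ∀ P : (Fin d → 𝒳) → ℝ, IsProb P → ∀ ε : ℝ, 0 < ε → ∃ δ : ℝ, 0 < δ ∧
      ∀ P' : (Fin d → 𝒳) → ℝ, IsProb P' → tvDist P P' < δ →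
        |exchWeight P' - exchWeight P| < ε :=
  stmt12_general
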